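/- Let (Ω, ℱ, P) be a probability space, let Z and H be integrable real random variables with Z ≥ H almost surely, let S : Ω → {0, 1} be measurable with P(S = 0) = ε, and let q be a real number with P(H ≤ q) = ε. Then E[(1 − S)·Z] ≥ E[H·𝟙{H ≤ q}]. -/

import Mathlib

/-!
Bathtub principle: among all events of probability `ε`, the sublevel set `{H ≤ q}` carries the
smallest integral of `H`, because `(𝟙_s - 𝟙_{H ≤ q}) (H - q) ≥ 0` pointwise for every event `s`
and the constant `q` integrates to the same value over events of equal probability. Since
`1 - S` is the indicator of `{S = 0}`, an event of probability `ε`, and `Z ≥ H`, this gives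
`E[(1 - S) Z] ≥ E[(1 - S) H] ≥ E[H 𝟙{H ≤ q}]`.
-/

open MeasureTheory
open scoped ENNReal

theorem indicator_sublevel_sub_le_indicator_sub {α : Type*} {f : α → ℝ} {q : ℝ}
    (s : Set α) (x : α) :
    {x | f x ≤ q}.indicator (fun x => f x - q) x ≤ s.indicator (fun x => f x - q) x := by
  by_cases hxt : f x ≤ q <;> by_cases hxs : x ∈ s <;> simp [Set.indicator, hxt, hxs]
  linarith

theorem setIntegral_sublevel_le_of_measure_eq {α : Type*} [MeasurableSpace α] {μ : Measure α}
    [IsFiniteMeasure μ] {f : α → ℝ} (hf : Integrable f μ) (q : ℝ) {s : Set α}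
    (hs : NullMeasurableSet s μ) (hμs : μ s = μ {x | f x ≤ q}) :
    ∫ x in {x | f x ≤ q}, f x ∂μ ≤ ∫ x in s, f x ∂μ := by
  have ht : NullMeasurableSet {x | f x ≤ q} μ :=
    hf.aestronglyMeasurable.nullMeasurableSet_le aestronglyMeasurable_const
  have hfq : Integrable (fun x => f x - q) μ := hf.sub (integrable_const q)
  have hshift : ∫ x in {x | f x ≤ q}, (f x - q) ∂μ ≤ ∫ x in s, (f x - q) ∂μ := by
    rw [← integral_indicator₀ ht, ← integral_indicator₀ hs]
    exact integral_mono (hfq.indicator₀ ht) (hfq.indicator₀ hs)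
      (indicator_sublevel_sub_le_indicator_sub s)
  have hμs_real : μ.real s = μ.real {x | f x ≤ q} := congrArg ENNReal.toReal hμs
  rw [integral_sub hf.integrableOn (integrable_const q), integral_sub hf.integrableOn
    (integrable_const q), setIntegral_const, setIntegral_const, hμs_real] at hshift
  linarith

theorem one_sub_mul_eq_indicator {Ω : Type*} {S : Ω → ℝ} (hS01 : ∀ ω, S ω = 0 ∨ S ω = 1)
    (Z : Ω → ℝ) (ω : Ω) : (1 - S ω) * Z ω = {ω | S ω = 0}.indicator Z ω := by
  rcases hS01 ω with h | h <;> simp [h]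

/-- Optimization step for the sharp lower bound in the X-mixture model: if `Z ≥ H` a.s.,
`S` takes values in `{0,1}` with `P(S = 0) = ε`, and `q` satisfies `P(H ≤ q) = ε`, then
`E[(1 − S)·Z] ≥ E[H·𝟙{H ≤ q}]`. -/
theorem lower_bound_optimization_step
    {Ω : Type*} [MeasurableSpace Ω] (P : Measure Ω) [IsProbabilityMeasure P]
    (Z H : Ω → ℝ) (hZ : Integrable Z P) (hH : Integrable H P)
    (hZH : ∀ᵐ ω ∂P, Z ω ≥ H ω)
    (S : Ω → ℝ) (hS : Measurable S) (hS01 : ∀ ω, S ω = 0 ∨ S ω = 1)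
    (ε : ℝ≥0∞) (hSε : P {ω | S ω = 0} = ε)
    (q : ℝ) (hq : P {ω | H ω ≤ q} = ε) :
    ∫ ω, (1 - S ω) * Z ω ∂P ≥ ∫ ω, Set.indicator {ω | H ω ≤ q} H ω ∂P := by
  have hA : MeasurableSet {ω | S ω = 0} := hS (measurableSet_singleton 0)
  calc ∫ ω, Set.indicator {ω | H ω ≤ q} H ω ∂P
      = ∫ ω in {ω | H ω ≤ q}, H ω ∂P :=
        integral_indicator₀ (hH.aestronglyMeasurable.nullMeasurableSet_le
          aestronglyMeasurable_const)
    _ ≤ ∫ ω in {ω | S ω = 0}, H ω ∂P :=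
        setIntegral_sublevel_le_of_measure_eq hH q hA.nullMeasurableSet (hSε.trans hq.symm)
    _ ≤ ∫ ω in {ω | S ω = 0}, Z ω ∂P :=
        setIntegral_mono_ae hH.integrableOn hZ.integrableOn hZH
    _ = ∫ ω, (1 - S ω) * Z ω ∂P := by
        rw [← integral_indicator hA]
        exact integral_congr_ae (.of_forall fun ω => (one_sub_mul_eq_indicator hS01 Z ω).symm)
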